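/- arXiv:1911.02641 — 3 statements merged into one kernel-verified Lean document; each statement's English description precedes it below -/
import Mathlib

section
/- Let H be symmetric positive semidefinite, G have full row rank p, and ρ > 0. Define E11 := (H+ρI_q)⁻¹ − (H+ρI_q)⁻¹ Gᵀ (G (H+ρI_q)⁻¹ Gᵀ)⁻¹ G (H+ρI_q)⁻¹. Then rank(E11) = q − p. -/
/-!
Write `M = H + ρ I`, which is positive definite, and `K = G M⁻¹ Gᵀ`, which is positive definite
because `G` has independent rows. Then `G E₁₁ = 0` and `E₁₁ M = I - M⁻¹ Gᵀ K⁻¹ G`, which fixes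
`ker G`; hence the column space of `E₁₁` is exactly `ker G`, of dimension `q - p`.
-/

open Matrix

namespace Matrix

variable {m n R : Type*} [Fintype n]

lemma vecMul_injective_of_rank_eq_card [Fintype m] [Field R] {G : Matrix m n R}
    (hG : G.rank = Fintype.card m) : Function.Injective G.vecMul := by
  rw [vecMul_injective_iff, linearIndependent_iff_card_eq_finrank_span, Set.finrank,
    ← rank_eq_finrank_span_row, hG]

lemma rank_add_finrank_ker_mulVecLin [Field R] (A : Matrix m n R) :
    A.rank + Module.finrank R (LinearMap.ker A.mulVecLin) = Fintype.card n := by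
  rw [rank, LinearMap.finrank_range_add_finrank_ker, Module.finrank_fintype_fun_eq_card]

section ObliqueProjection

variable [Fintype m] [DecidableEq m] [DecidableEq n]
  {M : Matrix n n R} {G : Matrix m n R} {B : Matrix n m R}

lemma mul_inv_sub_inv_mul_eq_zero [CommRing R] (hK : IsUnit (G * M⁻¹ * B).det) :
    G * (M⁻¹ - M⁻¹ * B * (G * M⁻¹ * B)⁻¹ * G * M⁻¹) = 0 := by
  have hKK : G * M⁻¹ * B * (G * M⁻¹ * B)⁻¹ = 1 := mul_nonsing_inv _ hK
  rw [Matrix.mul_sub, sub_eq_zero, show G * (M⁻¹ * B * (G * M⁻¹ * B)⁻¹ * G * M⁻¹)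
    = G * M⁻¹ * B * (G * M⁻¹ * B)⁻¹ * (G * M⁻¹) by simp only [Matrix.mul_assoc], hKK,
    Matrix.one_mul]

lemma inv_sub_inv_mul_mul_self [CommRing R] (hM : IsUnit M.det) :
    (M⁻¹ - M⁻¹ * B * (G * M⁻¹ * B)⁻¹ * G * M⁻¹) * M = 1 - M⁻¹ * B * (G * M⁻¹ * B)⁻¹ * G := by
  rw [Matrix.sub_mul, nonsing_inv_mul _ hM, Matrix.mul_assoc _ M⁻¹, nonsing_inv_mul _ hM,
    Matrix.mul_one]

theorem range_mulVecLin_inv_sub_eq_ker [CommRing R] (hM : IsUnit M.det)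
    (hK : IsUnit (G * M⁻¹ * B).det) :
    LinearMap.range (M⁻¹ - M⁻¹ * B * (G * M⁻¹ * B)⁻¹ * G * M⁻¹).mulVecLin =
      LinearMap.ker G.mulVecLin := by
  apply le_antisymm
  · rintro _ ⟨x, rfl⟩
    simp only [LinearMap.mem_ker, mulVecLin_apply, mulVec_mulVec,
      mul_inv_sub_inv_mul_eq_zero hK, zero_mulVec]
  · intro x hx
    rw [LinearMap.mem_ker, mulVecLin_apply] at hx
    refine ⟨M *ᵥ x, ?_⟩
    rw [mulVecLin_apply, mulVec_mulVec, inv_sub_inv_mul_mul_self hM, sub_mulVec, one_mulVec,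
      ← mulVec_mulVec, hx, mulVec_zero, sub_zero]

theorem rank_inv_sub_eq_card_sub_rank [Field R] (hM : IsUnit M.det)
    (hK : IsUnit (G * M⁻¹ * B).det) :
    (M⁻¹ - M⁻¹ * B * (G * M⁻¹ * B)⁻¹ * G * M⁻¹).rank = Fintype.card n - G.rank := by
  rw [rank, range_mulVecLin_inv_sub_eq_ker hM hK, ← rank_add_finrank_ker_mulVecLin G,
    Nat.add_sub_cancel_left]

end ObliqueProjection

end Matrix

theorem stmt1_general {q p : ℕ} (H : Matrix (Fin q) (Fin q) ℝ) (G : Matrix (Fin p) (Fin q) ℝ)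
    (hH : H.PosSemidef) (hG : G.rank = p) (ρ : ℝ) (hρ : 0 < ρ)
    (E11 : Matrix (Fin q) (Fin q) ℝ)
    (hE11 : E11 = (H + ρ • 1)⁻¹ -
      (H + ρ • 1)⁻¹ * Gᵀ * (G * (H + ρ • 1)⁻¹ * Gᵀ)⁻¹ * G * (H + ρ • 1)⁻¹) :
    E11.rank = q - p := by
  have hM : (H + ρ • 1).PosDef := PosDef.posSemidef_add hH (PosDef.one.smul hρ)
  have hK : (G * (H + ρ • 1)⁻¹ * Gᵀ).PosDef := by
    simpa only [conjTranspose_eq_transpose_of_trivial] using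
      hM.inv.mul_mul_conjTranspose_same (vecMul_injective_of_rank_eq_card (by simpa using hG))
  rw [hE11, rank_inv_sub_eq_card_sub_rank ((isUnit_iff_isUnit_det _).mp hM.isUnit)
    ((isUnit_iff_isUnit_det _).mp hK.isUnit), hG, Fintype.card_fin]

theorem stmt1 {q p : ℕ} (H : Matrix (Fin q) (Fin q) ℝ) (G : Matrix (Fin p) (Fin q) ℝ)
    (hH : H.PosSemidef) (hG : G.rank = p) (hpq : p ≤ q) (ρ : ℝ) (hρ : 0 < ρ)
    (E11 : Matrix (Fin q) (Fin q) ℝ)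
    (hE11 : E11 = (H + ρ • 1)⁻¹ -
      (H + ρ • 1)⁻¹ * Gᵀ * (G * (H + ρ • 1)⁻¹ * Gᵀ)⁻¹ * G * (H + ρ • 1)⁻¹) :
    E11.rank = q - p :=
  stmt1_general H G hH hG ρ hρ E11 hE11
end

section
/- With H, G, ρ, E11 as specified, the matrix (H+ρI_q)((1/ρ)I_q − E11)(H+ρI_q) equals (1/ρ)H² + H + Gᵀ(G(H+ρI_q)⁻¹Gᵀ)⁻¹G. -/
/-! With A = H + ρI positive definite, conjugation by A cancels the inverses in E11, so
A E11 A = A − Gᵀ(GA⁻¹Gᵀ)⁻¹G; what remains is the expansion (1/ρ)A² − A = (1/ρ)H² + H. -/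

open Matrix

lemma Matrix.PosSemidef.posDef_add_smul_one {n : Type*} [Fintype n] [DecidableEq n]
    {H : Matrix n n ℝ} (hH : H.PosSemidef) {ρ : ℝ} (hρ : 0 < ρ) : (H + ρ • 1).PosDef :=
  PosDef.posSemidef_add hH (PosDef.one.smul hρ)

lemma Matrix.mul_nonsing_inv_sub_inv_mul_inv_mul {n K : Type*} [Fintype n] [DecidableEq n]
    [CommRing K]
    {A : Matrix n n K} (hA : IsUnit A.det) (B : Matrix n n K) :
    A * (A⁻¹ - A⁻¹ * B * A⁻¹) * A = A - B := by
  rw [mul_sub, sub_mul, mul_nonsing_inv _ hA, one_mul, ← Matrix.mul_assoc, ← Matrix.mul_assoc,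
    mul_nonsing_inv _ hA, one_mul, nonsing_inv_mul_cancel_right _ _ hA]

lemma Matrix.inv_smul_mul_self_add_smul_one_sub {n K : Type*} [Fintype n] [DecidableEq n]
    [Field K]
    (H : Matrix n n K) {ρ : K} (hρ : ρ ≠ 0) :
    ρ⁻¹ • ((H + ρ • 1) * (H + ρ • 1)) - (H + ρ • 1) = ρ⁻¹ • (H * H) + H := by
  simp only [add_mul, mul_add, Matrix.smul_mul, Matrix.mul_smul, one_mul, mul_one, smul_add,
    smul_smul, inv_mul_cancel₀ hρ, inv_mul_cancel_left₀ hρ, one_smul]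
  abel

theorem stmt3_general {q p : ℕ} (H : Matrix (Fin q) (Fin q) ℝ) (G : Matrix (Fin p) (Fin q) ℝ)
    (hH : H.PosSemidef) (ρ : ℝ) (hρ : 0 < ρ)
    (E11 : Matrix (Fin q) (Fin q) ℝ)
    (hE11 : E11 = (H + ρ • 1)⁻¹ -
      (H + ρ • 1)⁻¹ * Gᵀ * (G * (H + ρ • 1)⁻¹ * Gᵀ)⁻¹ * G * (H + ρ • 1)⁻¹) :
    (H + ρ • 1) * ((1 / ρ) • (1 : Matrix (Fin q) (Fin q) ℝ) - E11) * (H + ρ • 1) =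
      (1 / ρ) • (H * H) + H + Gᵀ * (G * (H + ρ • 1)⁻¹ * Gᵀ)⁻¹ * G := by
  set A := H + ρ • (1 : Matrix (Fin q) (Fin q) ℝ)
  set B := Gᵀ * (G * A⁻¹ * Gᵀ)⁻¹ * G
  have hA : IsUnit A.det := (isUnit_iff_isUnit_det A).mp (hH.posDef_add_smul_one hρ).isUnit
  have hE11' : E11 = A⁻¹ - A⁻¹ * B * A⁻¹ := by
    simp only [hE11, B, Matrix.mul_assoc]
  calc A * ((1 / ρ) • 1 - E11) * A = ρ⁻¹ • (A * A) - A * E11 * A := by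
        rw [mul_sub, sub_mul, Matrix.mul_smul, mul_one, Matrix.smul_mul, one_div]
    _ = ρ⁻¹ • (A * A) - A + B := by
        rw [hE11', mul_nonsing_inv_sub_inv_mul_inv_mul hA, sub_sub_eq_add_sub, add_sub_right_comm]
    _ = (1 / ρ) • (H * H) + H + B := by
        rw [inv_smul_mul_self_add_smul_one_sub H hρ.ne', one_div]

theorem stmt3 {q p : ℕ} (H : Matrix (Fin q) (Fin q) ℝ) (G : Matrix (Fin p) (Fin q) ℝ)
    (hH : H.PosSemidef) (hG : G.rank = p) (hpq : p ≤ q) (ρ : ℝ) (hρ : 0 < ρ)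
    (E11 : Matrix (Fin q) (Fin q) ℝ)
    (hE11 : E11 = (H + ρ • 1)⁻¹ -
      (H + ρ • 1)⁻¹ * Gᵀ * (G * (H + ρ • 1)⁻¹ * Gᵀ)⁻¹ * G * (H + ρ • 1)⁻¹) :
    (H + ρ • 1) * ((1 / ρ) • (1 : Matrix (Fin q) (Fin q) ℝ) - E11) * (H + ρ • 1) =
      (1 / ρ) • (H * H) + H + Gᵀ * (G * (H + ρ • 1)⁻¹ * Gᵀ)⁻¹ * G :=
  stmt3_general H G hH ρ hρ E11 hE11
end

section
/- Assume the augmented state x = (x, z^{(0)}, μ^{(0)}) satisfies K^{(j)} x ∈ Z for all j ∈ {1,…,M}, where K^{(j)} := [ (Σ_{i=0}^{j−1} (ρE11)^i) E12 F , (ρE11)^j , (ρE11)^{j−1}((1/ρ)I_q − E11) ] and μ^{(0)} is the third block of x. If μ^{(0)} enters the recursion z^{(j+1)} = proj_Z(K^{(1)}(x, z^{(j)}, μ^{(j)})), μ^{(j+1)} = ρ(K^{(1)}(x, z^{(j)}, μ^{(j)}) − z^{(j+1)}) with z^{(0)}, μ^{(0)} the blocks of x, then for all j ∈ {1,…,M}: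 z^{(j)} = K^{(j)} x and μ^{(j)} = 0. -/
/-!
Induction on `j`. Once `z⁽ʲ⁾ = K⁽ʲ⁾𝐱` and `μ⁽ʲ⁾ = 0`, the next step evaluates
`K⁽¹⁾(x, K⁽ʲ⁾𝐱, 0) = K⁽ʲ⁺¹⁾𝐱` (the geometric sum gains one term). This point lies in the box `Z`,
so the projection fixes it and the new multiplier `ρ (ζ − proj_Z ζ)` vanishes.
-/

open Matrix

/-- `Kapp ρ E11 E12 F j x z μ = K⁽ʲ⁾ 𝐱` where
`K⁽ʲ⁾ = [ (Σ_{i<j} (ρE₁₁)ⁱ) E₁₂ F , (ρE₁₁)ʲ , (ρE₁₁)^{j-1}((1/ρ)I − E₁₁) ]`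
acts on the augmented state `𝐱 = (x, z, μ)`. -/
noncomputable def Kapp {n p q : ℕ} (ρ : ℝ) (E11 : Matrix (Fin q) (Fin q) ℝ)
    (E12 : Matrix (Fin q) (Fin p) ℝ) (F : Matrix (Fin p) (Fin n) ℝ)
    (j : ℕ) (x : Fin n → ℝ) (z μ : Fin q → ℝ) : Fin q → ℝ :=
  ((∑ i ∈ Finset.range j, (ρ • E11) ^ i) * E12 * F) *ᵥ x
    + ((ρ • E11) ^ j) *ᵥ z
    + ((ρ • E11) ^ (j - 1) * ((1 / ρ) • 1 - E11)) *ᵥ μ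

/-- The ADMM recursion `z⁽ʲ⁺¹⁾ = proj_Z(K⁽¹⁾(x, z⁽ʲ⁾, μ⁽ʲ⁾))`,
`μ⁽ʲ⁺¹⁾ = ρ (K⁽¹⁾(x, z⁽ʲ⁾, μ⁽ʲ⁾) − z⁽ʲ⁺¹⁾)`, returning `(z⁽ʲ⁾, μ⁽ʲ⁾)`. -/
noncomputable def admmSeq {n p q : ℕ} (ρ : ℝ) (E11 : Matrix (Fin q) (Fin q) ℝ)
    (E12 : Matrix (Fin q) (Fin p) ℝ) (F : Matrix (Fin p) (Fin n) ℝ)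
    (proj : (Fin q → ℝ) → (Fin q → ℝ)) (x : Fin n → ℝ) (z0 μ0 : Fin q → ℝ) :
    ℕ → (Fin q → ℝ) × (Fin q → ℝ)
  | 0 => (z0, μ0)
  | (j + 1) =>
      let prev := admmSeq ρ E11 E12 F proj x z0 μ0 j
      let ζ := Kapp ρ E11 E12 F 1 x prev.1 prev.2
      let z' := proj ζ
      (z', ρ • (ζ - z'))

section

variable {n p q : ℕ} (ρ : ℝ) (E11 : Matrix (Fin q) (Fin q) ℝ)
  (E12 : Matrix (Fin q) (Fin p) ℝ) (F : Matrix (Fin p) (Fin n) ℝ) (x : Fin n → ℝ)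

theorem Kapp_one_zero (w : Fin q → ℝ) :
    Kapp ρ E11 E12 F 1 x w 0 = (E12 * F) *ᵥ x + (ρ • E11) *ᵥ w := by
  simp [Kapp]

/-- Fails for `j = 0`: truncated subtraction gives `(ρE₁₁)^(0 - 1) = 1`, so `Kapp 0` still depends on `μ`. -/
theorem Kapp_succ (z μ : Fin q → ℝ) {j : ℕ} (hj : j ≠ 0) :
    Kapp ρ E11 E12 F (j + 1) x z μ = Kapp ρ E11 E12 F 1 x (Kapp ρ E11 E12 F j x z μ) 0 := by
  obtain ⟨k, rfl⟩ := Nat.exists_eq_succ_of_ne_zero hj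
  rw [Kapp_one_zero]
  simp only [Kapp, geom_sum_succ (x := ρ • E11) (n := k + 1), Matrix.add_mul, Matrix.one_mul,
    Matrix.add_mulVec, Matrix.mulVec_add, Matrix.mulVec_mulVec, Matrix.mul_assoc, pow_succ',
    Nat.add_sub_cancel]
  abel

variable (proj : (Fin q → ℝ) → (Fin q → ℝ)) (z0 μ0 : Fin q → ℝ)

theorem admmSeq_succ_of_proj_eq {j : ℕ} {w ν : Fin q → ℝ}
    (hj : admmSeq ρ E11 E12 F proj x z0 μ0 j = (w, ν))
    (hproj : proj (Kapp ρ E11 E12 F 1 x w ν) = Kapp ρ E11 E12 F 1 x w ν) :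
    admmSeq ρ E11 E12 F proj x z0 μ0 (j + 1) = (Kapp ρ E11 E12 F 1 x w ν, 0) := by
  simp only [admmSeq, hj, hproj, sub_self, smul_zero]

theorem admmSeq_eq_Kapp_of_proj_fixed {M : ℕ}
    (hfix : ∀ j ∈ Finset.Icc 1 M,
      proj (Kapp ρ E11 E12 F j x z0 μ0) = Kapp ρ E11 E12 F j x z0 μ0) :
    ∀ j ∈ Finset.Icc 1 M,
      admmSeq ρ E11 E12 F proj x z0 μ0 j = (Kapp ρ E11 E12 F j x z0 μ0, 0) := by
  intro j hj
  obtain ⟨hj1, hjM⟩ := Finset.mem_Icc.mp hj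
  clear hj
  induction j, hj1 using Nat.le_induction with
  | base => exact admmSeq_succ_of_proj_eq ρ E11 E12 F x proj z0 μ0 rfl (hfix 1 (by simp [hjM]))
  | succ k hk ih =>
    have hfix_succ := hfix (k + 1) (Finset.mem_Icc.mpr ⟨by omega, hjM⟩)
    rw [Kapp_succ ρ E11 E12 F x z0 μ0 (by omega)] at hfix_succ ⊢
    exact admmSeq_succ_of_proj_eq ρ E11 E12 F x proj z0 μ0 (ih (by omega)) hfix_succ

end

theorem stmt10_general {n p q : ℕ} (ρ : ℝ)
    (E11 : Matrix (Fin q) (Fin q) ℝ) (E12 : Matrix (Fin q) (Fin p) ℝ)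
    (F : Matrix (Fin p) (Fin n) ℝ) (lo hi : Fin q → ℝ)
    (x : Fin n → ℝ) (z0 μ0 : Fin q → ℝ) (M : ℕ)
    (hZ : ∀ j ∈ Finset.Icc 1 M, ∀ i,
      lo i ≤ Kapp ρ E11 E12 F j x z0 μ0 i ∧ Kapp ρ E11 E12 F j x z0 μ0 i ≤ hi i) :
    ∀ j ∈ Finset.Icc 1 M,
      (admmSeq ρ E11 E12 F (fun v i => max (lo i) (min (hi i) (v i))) x z0 μ0 j).1 =
          Kapp ρ E11 E12 F j x z0 μ0 ∧
      (admmSeq ρ E11 E12 F (fun v i => max (lo i) (min (hi i) (v i))) x z0 μ0 j).2 = 0 := by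
  have hfix : ∀ j ∈ Finset.Icc 1 M,
      (fun i => max (lo i) (min (hi i) (Kapp ρ E11 E12 F j x z0 μ0 i))) =
        Kapp ρ E11 E12 F j x z0 μ0 := by
    intro j hj
    funext i
    obtain ⟨hlo, hhi⟩ := hZ j hj i
    rw [min_eq_right hhi, max_eq_right hlo]
  intro j hj
  exact Prod.ext_iff.mp (admmSeq_eq_Kapp_of_proj_fixed ρ E11 E12 F x _ z0 μ0 hfix j hj)

theorem stmt10 {n p q : ℕ} (ρ : ℝ) (hρ : 0 < ρ)
    (E11 : Matrix (Fin q) (Fin q) ℝ) (E12 : Matrix (Fin q) (Fin p) ℝ)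
    (F : Matrix (Fin p) (Fin n) ℝ) (lo hi : Fin q → ℝ)
    (hlo : ∀ i, lo i < 0) (hhi : ∀ i, 0 < hi i)
    (x : Fin n → ℝ) (z0 μ0 : Fin q → ℝ) (M : ℕ) (hM : 1 ≤ M)
    (hZ : ∀ j ∈ Finset.Icc 1 M, ∀ i,
      lo i ≤ Kapp ρ E11 E12 F j x z0 μ0 i ∧ Kapp ρ E11 E12 F j x z0 μ0 i ≤ hi i) :
    ∀ j ∈ Finset.Icc 1 M,
      (admmSeq ρ E11 E12 F (fun v i => max (lo i) (min (hi i) (v i))) x z0 μ0 j).1 =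
          Kapp ρ E11 E12 F j x z0 μ0 ∧
      (admmSeq ρ E11 E12 F (fun v i => max (lo i) (min (hi i) (v i))) x z0 μ0 j).2 = 0 :=
  stmt10_general ρ E11 E12 F lo hi x z0 μ0 M hZ
end
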